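/- arXiv:1806.03164 — 2 statements merged into one kernel-verified Lean document; each statement's English description precedes it below -/
import Mathlib

section
/- Let T be a perfect Roman domination stable tree of order n ≥ 3 with diameter at least 4 such that T contains no pendant path P_3, and let P = x_1x_2⋯x_k be a longest path of T with d(x_2) = 2. Then d(x_3) = 2. -/
open SimpleGraph

/-- A perfect Roman dominating function: values in {0,1,2}, and every vertex with
value 0 has exactly one neighbor with value 2. -/
def IsPRDF {V : Type*} (G : SimpleGraph V) (f : V → ℕ) : Prop :=
  (∀ v, f v ≤ 2) ∧ ∀ u, f u = 0 → ∃! v, G.Adj u v ∧ f v = 2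

/-- The perfect Roman domination number: minimum weight of a PRDF. -/
noncomputable def prdn {V : Type*} [Fintype V] (G : SimpleGraph V) : ℕ :=
  sInf {w | ∃ f : V → ℕ, IsPRDF G f ∧ ∑ v, f v = w}

/-- A graph is perfect Roman domination stable if removing any vertex
leaves the perfect Roman domination number unchanged. -/
noncomputable def Stable {V : Type*} [Fintype V] [DecidableEq V] (G : SimpleGraph V) : Prop :=
  ∀ v : V, prdn (G.induce {u | u ≠ v}) = prdn G

/-- The set of vertices receiving 0 under every minimum-weight PRDF. -/
def Wset {V : Type*} [Fintype V] (G : SimpleGraph V) : Set V :=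
  {u | ∀ f : V → ℕ, IsPRDF G f → (∑ v, f v) = prdn G → f u = 0}

/-- Degree of a vertex. -/
noncomputable def deg {V : Type*} (G : SimpleGraph V) (v : V) : ℕ := (G.neighborSet v).ncard

/-!
Take a minimum perfect Roman dominating function `f` of the stable tree. Stability forbids the
value `1` (dropping such a vertex lowers the weight) and the value `2` on a leaf (drop the leaf
and raise its neighbour to at least `1`). Hence `f x₁ = 0` and `f x₂ = 2`, and then `f x₃ = 0`,
since otherwise `x₁ ↦ 1, x₂ ↦ 0` would give a lighter function. If `d(x₃) ≠ 2`, then `x₃` has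
a neighbour `w` off the path; `w` gets `0` and has a neighbour `u` with value `2`. Now
`u w x₃ x₄ ⋯ x_k` is again a longest path, so `u` is a leaf carrying `2`, which is impossible.
-/
lemma Finset.sum_update_add_apply {ι M : Type*} [Fintype ι] [DecidableEq ι] [AddCommMonoid M]
    (f : ι → M) (i : ι) (b : M) :
    ∑ x, Function.update f i b x + f i = ∑ x, f x + b := by
  rw [Finset.sum_update_of_mem (Finset.mem_univ i), Finset.sdiff_singleton_eq_erase,
    ← Finset.add_sum_erase _ f (Finset.mem_univ i)]
  abel

namespace SimpleGraph

variable {V : Type*} {G : SimpleGraph V}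

lemma deg_eq_two_iff_forall_adj {v a b : V} (hab : a ≠ b) (ha : G.Adj v a) (hb : G.Adj v b) :
    deg G v = 2 ↔ ∀ z, G.Adj v z → z = a ∨ z = b := by
  have hsub : ({a, b} : Set V) ⊆ G.neighborSet v := Set.insert_subset ha (by simpa using hb)
  refine ⟨fun h z hz => ?_, fun h => ?_⟩
  · have hfin := Set.finite_of_ncard_ne_zero (s := G.neighborSet v) (by unfold deg at h; omega)
    have := Set.eq_of_subset_of_ncard_le hsub (by rw [Set.ncard_pair hab]; exact h.le) hfin
    exact this.symm.subset hz
  · have : G.neighborSet v = {a, b} := Set.Subset.antisymm (fun z hz => h z hz) hsub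
    rw [deg, this, Set.ncard_pair hab]

lemma exists_adj_ne_ne_of_deg_ne_two {v a b : V} (hab : a ≠ b) (ha : G.Adj v a)
    (hb : G.Adj v b) (hv : deg G v ≠ 2) : ∃ z, G.Adj v z ∧ z ≠ a ∧ z ≠ b := by
  by_contra! hcon
  exact hv ((deg_eq_two_iff_forall_adj hab ha hb).mpr fun z hz =>
    or_iff_not_imp_left.mpr (hcon z hz))

lemma IsAcyclic.isPath_cons_of_ne_snd {u v w : V} {p : G.Walk u v} (hG : G.IsAcyclic)
    (hp : p.IsPath) (hadj : G.Adj w u) (hw : w ≠ p.snd) : (Walk.cons hadj p).IsPath :=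
  (Walk.cons_isPath_iff _ _).mpr ⟨hp, fun hs => hw (hG.eq_snd_of_adj_start hp hadj.symm hs)⟩

namespace Walk

def IsLongestPath {u v : V} (p : G.Walk u v) : Prop :=
  p.IsPath ∧ ∀ a b (q : G.Walk a b), q.IsPath → q.length ≤ p.length

namespace IsLongestPath

variable {u v w : V} {p : G.Walk u v}

lemma dist_le (hp : p.IsLongestPath) (hG : G.Connected) (a b : V) : G.dist a b ≤ p.length := by
  obtain ⟨q, hq, hqlen⟩ := hG.exists_path_of_dist a b
  exact hqlen ▸ hp.2 a b q hq

lemma eq_snd_of_adj (hp : p.IsLongestPath) (hG : G.IsAcyclic) (hadj : G.Adj u w) :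
    w = p.snd := by
  by_contra hw
  have := hp.2 _ _ _ (hG.isPath_cons_of_ne_snd hp.1 hadj.symm hw)
  simp at this

/-- Trading the first two edges of `p` for the branch `p.getVert 2, w, t` keeps the length,
so `t` is again the end of a longest path. -/
lemma eq_of_adj_of_adj_getVert_two (hp : p.IsLongestPath) (hG : G.IsAcyclic)
    (h2 : 2 ≤ p.length) {t z : V} (hw : G.Adj (p.getVert 2) w) (hw3 : w ≠ p.getVert 3)
    (ht : G.Adj w t) (ht2 : t ≠ p.getVert 2) (hz : G.Adj t z) : z = w := by
  let q := cons ht.symm (cons hw.symm (p.drop 2))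
  have hq : q.IsPath :=
    hG.isPath_cons_of_ne_snd (hG.isPath_cons_of_ne_snd (hp.1.drop 2) _ (by simpa using hw3)) _
      (by simpa using ht2)
  have hqlen : q.length = p.length := by simp [q]; omega
  have hql : q.IsLongestPath := ⟨hq, hqlen ▸ hp.2⟩
  exact hql.eq_snd_of_adj hG hz

end IsLongestPath

end Walk

end SimpleGraph

section PRDF

variable {V : Type*} {G : SimpleGraph V} {f : V → ℕ}

lemma prdn_le_sum [Fintype V] (hf : IsPRDF G f) : prdn G ≤ ∑ v, f v :=
  Nat.sInf_le ⟨f, hf, rfl⟩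

lemma exists_isPRDF_sum_eq_prdn [Fintype V] (G : SimpleGraph V) :
    ∃ f : V → ℕ, IsPRDF G f ∧ ∑ v, f v = prdn G := by
  have hone : IsPRDF G fun _ => 1 := ⟨fun _ => one_le_two, fun _ h => absurd h one_ne_zero⟩
  exact Nat.sInf_mem (s := {w | ∃ f : V → ℕ, IsPRDF G f ∧ ∑ v, f v = w})
    ⟨_, _, hone, rfl⟩

lemma IsPRDF.induce_ne (hf : IsPRDF G f) {v : V} (hv : ∀ u, G.Adj u v → f u = 0 → f v ≠ 2) :
    IsPRDF (G.induce {u | u ≠ v}) (fun u => f u) := by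
  refine ⟨fun u => hf.1 u, fun ⟨u, _⟩ h0 => ?_⟩
  obtain ⟨t, ⟨hadj, ht⟩, huniq⟩ := hf.2 u h0
  have htv : t ≠ v := by rintro rfl; exact hv u hadj h0 ht
  exact ⟨⟨t, htv⟩, ⟨hadj, ht⟩, fun t' ht' => Subtype.ext (huniq t' ht')⟩

lemma IsPRDF.eq_of_adj_of_adj (hf : IsPRDF G f) {u a b : V} (hu : f u = 0) (ha : G.Adj u a)
    (hfa : f a = 2) (hb : G.Adj u b) (hfb : f b = 2) : a = b :=
  (hf.2 u hu).unique ⟨ha, hfa⟩ ⟨hb, hfb⟩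

/-- Lowering `w` to `0` and raising `u` to `1` gives a lighter PRDF: `v` is still the unique
`2`-neighbour of `w`. -/
lemma IsPRDF.prdn_lt_sum_of_forall_adj_eq_or_eq [Fintype V] [DecidableEq V] (hf : IsPRDF G f)
    {u w v : V} (hwv : G.Adj w v) (hnbr : ∀ t, G.Adj w t → t = u ∨ t = v) (hu : f u = 0)
    (hw : f w = 2) (hv : f v = 2) : prdn G < ∑ x, f x := by
  have huw : u ≠ w := by rintro rfl; omega
  have hvu : v ≠ u := by rintro rfl; omega
  have hsum₁ := Finset.sum_update_add_apply f u 1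
  have hsum₂ := Finset.sum_update_add_apply (Function.update f u 1) w 0
  rw [hu] at hsum₁
  rw [Function.update_of_ne huw.symm, hw] at hsum₂
  set g := Function.update (Function.update f u 1) w 0
  have hgw : g w = 0 := Function.update_self ..
  have hgu : g u = 1 := by simp [g, huw]
  have hg_of_ne : ∀ z, z ≠ u → z ≠ w → g z = f z := fun z hzu hzw => by simp [g, hzu, hzw]
  have hg : IsPRDF G g := by
    refine ⟨fun z => ?_, fun z h0 => ?_⟩
    · by_cases hzu : z = u
      · rw [hzu, hgu]; omega
      by_cases hzw : z = w
      · rw [hzw, hgw]; omega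
      rw [hg_of_ne z hzu hzw]; exact hf.1 z
    by_cases hzw : z = w
    · rw [hzw]
      refine ⟨v, ⟨hwv, by rw [hg_of_ne v hvu hwv.ne', hv]⟩, fun t ⟨ht, ht2⟩ => ?_⟩
      rcases hnbr t ht with rfl | rfl
      · omega
      · rfl
    have hzu : z ≠ u := by rintro rfl; omega
    rw [hg_of_ne z hzu hzw] at h0
    have hzw' : ¬ G.Adj z w := by
      intro h
      rcases hnbr z h.symm with rfl | rfl
      · exact hzu rfl
      · omega
    refine (existsUnique_congr fun t => and_congr_right fun ht => ?_).mp (hf.2 z h0)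
    by_cases htu : t = u
    · rw [htu]; omega
    rw [hg_of_ne t htu (by rintro rfl; exact hzw' ht)]
  have := prdn_le_sum hg
  omega

variable [Fintype V] [DecidableEq V]

lemma Stable.prdn_le_sum_erase (hG : Stable G) (hf : IsPRDF G f) {v : V}
    (hv : ∀ u, G.Adj u v → f u = 0 → f v ≠ 2) :
    prdn G ≤ ∑ u ∈ Finset.univ.erase v, f u := by
  rw [← hG v]
  exact (prdn_le_sum (hf.induce_ne hv)).trans_eq (Finset.sum_subtype _ (by simp) _).symm

variable (hG : Stable G) (hf : IsPRDF G f) (hmin : ∑ v, f v = prdn G)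
include hG hf hmin

lemma Stable.apply_ne_one (v : V) : f v ≠ 1 := by
  intro h1
  have := hG.prdn_le_sum_erase hf (v := v) fun _ _ _ => by omega
  have := Finset.sum_erase_add _ f (Finset.mem_univ v)
  omega

lemma Stable.apply_eq_zero_or_two (v : V) : f v = 0 ∨ f v = 2 := by
  have := hf.1 v
  have := hG.apply_ne_one hf hmin v
  omega

lemma Stable.apply_ne_two_of_leaf {u w : V} (hleaf : ∀ z, G.Adj u z → z = w) : f u ≠ 2 := by
  intro hu
  have hsum := Finset.sum_update_add_apply f w (max (f w) 1)
  set g := Function.update f w (max (f w) 1)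
  have hg_two : ∀ t, g t = 2 ↔ f t = 2 := by
    intro t
    rcases eq_or_ne t w with rfl | htw
    · simp only [g, Function.update_self]; omega
    · simp only [g, Function.update_of_ne htw]
  have hgw : g w ≠ 0 := by simp [g]
  have hg : IsPRDF G g := by
    refine ⟨fun t => ?_, fun z hz => ?_⟩
    · rcases eq_or_ne t w with rfl | htw
      · simp only [g, Function.update_self]; have := hf.1 t; omega
      · simp only [g, Function.update_of_ne htw]; exact hf.1 t
    have hzw : z ≠ w := by rintro rfl; exact hgw hz
    simp only [g, Function.update_of_ne hzw] at hz
    simpa only [hg_two] using hf.2 z hz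
  have hle := hG.prdn_le_sum_erase hg (v := u) fun z hz hz0 _ => by
    rw [hleaf z hz.symm] at hz0; exact hgw hz0
  have hgu : g u = 2 := by rw [hg_two]; exact hu
  have := Finset.sum_erase_add _ g (Finset.mem_univ u)
  omega

lemma Stable.apply_eq_zero_and_apply_eq_two_of_leaf {u w : V}
    (hleaf : ∀ z, G.Adj u z → z = w) : f u = 0 ∧ f w = 2 := by
  have hu : f u = 0 :=
    (hG.apply_eq_zero_or_two hf hmin u).resolve_right (hG.apply_ne_two_of_leaf hf hmin hleaf)
  obtain ⟨t, ⟨ht, ht2⟩, -⟩ := hf.2 u hu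
  exact ⟨hu, hleaf t ht ▸ ht2⟩

end PRDF

theorem stmt9_general {V : Type*} [Fintype V] [DecidableEq V] (T : SimpleGraph V)
    (hT : T.IsTree) (hstab : Stable T)
    (hdiam : ∃ u w : V, 4 ≤ T.dist u w)
    (x y : V) (p : T.Walk x y) (hp : p.IsPath)
    (hlong : ∀ (a b : V) (q : T.Walk a b), q.IsPath → q.length ≤ p.length)
    (hx2 : deg T (p.getVert 1) = 2) :
    deg T (p.getVert 2) = 2 := by
  by_contra h3
  have hlp : p.IsLongestPath := ⟨hp, hlong⟩
  obtain ⟨f, hf, hmin⟩ := exists_isPRDF_sum_eq_prdn T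
  have hL : 4 ≤ p.length := by
    obtain ⟨a, b, hab⟩ := hdiam
    exact hab.trans (hlp.dist_le hT.connected a b)
  have hne : ∀ i j, i ≤ p.length → j ≤ p.length → i ≠ j → p.getVert i ≠ p.getVert j :=
    fun i j hi hj hij => hp.getVert_injOn.ne hi hj hij
  have a12 : T.Adj x (p.getVert 1) := by simpa using p.adj_getVert_succ (i := 0) (by omega)
  have a23 : T.Adj (p.getVert 1) (p.getVert 2) := p.adj_getVert_succ (by omega)
  have a34 : T.Adj (p.getVert 2) (p.getVert 3) := p.adj_getVert_succ (by omega)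
  obtain ⟨hfx, hfx2⟩ := hstab.apply_eq_zero_and_apply_eq_two_of_leaf hf hmin
    fun z hz => hlp.eq_snd_of_adj hT.isAcyclic hz
  have hN2 : ∀ z, T.Adj (p.getVert 1) z → z = x ∨ z = p.getVert 2 :=
    (deg_eq_two_iff_forall_adj (by simpa using hne 0 2 (by omega) (by omega) (by omega))
      a12.symm a23).mp hx2
  have hfx3 : f (p.getVert 2) = 0 := (hstab.apply_eq_zero_or_two hf hmin _).resolve_right
    fun h => (hf.prdn_lt_sum_of_forall_adj_eq_or_eq a23 hN2 hfx hfx2 h).ne hmin.symm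
  obtain ⟨w, hw, hwx2, hwx4⟩ :=
    exists_adj_ne_ne_of_deg_ne_two (hne 1 3 (by omega) (by omega) (by omega)) a23.symm a34 h3
  have hfw : f w = 0 := (hstab.apply_eq_zero_or_two hf hmin w).resolve_right
    fun h => hwx2 (hf.eq_of_adj_of_adj hfx3 hw h a23.symm hfx2)
  obtain ⟨u, ⟨hwu, hfu⟩, -⟩ := hf.2 w hfw
  have hux3 : u ≠ p.getVert 2 := by rintro rfl; omega
  exact hstab.apply_ne_two_of_leaf hf hmin
    (fun z hz => hlp.eq_of_adj_of_adj_getVert_two hT.isAcyclic (by omega) hw hwx4 hwu hux3 hz) hfu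

/-- in a stable tree of order ≥ 3, diameter ≥ 4, with no pendant path
P₃, if the second vertex of a longest path has degree 2 then so does the third. -/
theorem stmt9 {V : Type*} [Fintype V] [DecidableEq V] (T : SimpleGraph V)
    (hT : T.IsTree) (hstab : Stable T) (hn : 3 ≤ Fintype.card V)
    (hdiam : ∃ u w : V, 4 ≤ T.dist u w)
    (hnoP3 : ¬ ∃ v1 v2 v3 : V, T.Adj v1 v2 ∧ T.Adj v2 v3 ∧
      deg T v1 = 1 ∧ deg T v2 = 2 ∧ deg T v3 = 2)
    (x y : V) (p : T.Walk x y) (hp : p.IsPath)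
    (hlong : ∀ (a b : V) (q : T.Walk a b), q.IsPath → q.length ≤ p.length)
    (hx2 : deg T (p.getVert 1) = 2) :
    deg T (p.getVert 2) = 2 :=
  stmt9_general T hT hstab hdiam x y p hp hlong hx2
end

section
/- No double star DS_{p,q} (p, q ≥ 1) is perfect Roman domination stable. -/
set_option linter.unusedSectionVars false
set_option linter.unusedVariables false

open SimpleGraph

section Helpers

variable {V : Type*} [Fintype V]

lemma prdfset_nonempty (G : SimpleGraph V) :
    {w | ∃ f : V → ℕ, IsPRDF G f ∧ ∑ v, f v = w}.Nonempty :=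
  ⟨_, fun _ => 1, ⟨fun _ => one_le_two, fun u hu => by simp at hu⟩, rfl⟩

lemma prdn_le (G : SimpleGraph V) {f : V → ℕ} (hf : IsPRDF G f) : prdn G ≤ ∑ v, f v :=
  Nat.sInf_le ⟨f, hf, rfl⟩

lemma exists_min_prdf (G : SimpleGraph V) :
    ∃ f : V → ℕ, IsPRDF G f ∧ ∑ v, f v = prdn G :=
  Nat.sInf_mem (prdfset_nonempty G)

lemma le_prdn (G : SimpleGraph V) {m : ℕ}
    (h : ∀ f : V → ℕ, IsPRDF G f → m ≤ ∑ v, f v) : m ≤ prdn G := by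
  obtain ⟨f, hf, hs⟩ := exists_min_prdf G
  exact hs ▸ h f hf

lemma closed_reach (G : SimpleGraph V) (S : Set V)
    (hS : ∀ x ∈ S, ∀ y, G.Adj x y → y ∈ S) {u v : V}
    (h : G.Reachable u v) (hu : u ∈ S) : v ∈ S := by
  obtain ⟨p⟩ := h
  induction p with
  | nil => exact hu
  | cons h q ih => exact ih (hS _ hu _ h)

variable [DecidableEq V]

lemma exists_zero_of_sum_lt (f : V → ℕ) (s : Finset V)
    (h : ∑ v, f v < s.card) : ∃ v ∈ s, f v = 0 := by
  by_contra hc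
  push_neg at hc
  have h1 : s.card ≤ ∑ v ∈ s, f v := by
    simpa using Finset.card_nsmul_le_sum s f 1 (fun v hv => Nat.one_le_iff_ne_zero.2 (hc v hv))
  have h2 : ∑ v ∈ s, f v ≤ ∑ v, f v := Finset.sum_le_sum_of_subset (Finset.subset_univ s)
  omega

lemma sum_indicator_subtype (s : Set V) [Fintype ↥s] (x : V) (hx : x ∈ s) (k : ℕ) :
    ∑ u : ↥s, (if (u : V) = x then k else 0) = k := by
  rw [show (fun u : ↥s => if (u:V) = x then k else 0)
      = fun u : ↥s => if u = ⟨x, hx⟩ then k else 0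
    from funext fun u => by simp [Subtype.ext_iff]]
  simp

lemma sum2_le (f : V → ℕ) (x1 x2 : V) (h12 : x1 ≠ x2) :
    f x1 + f x2 ≤ ∑ v, f v := by
  have h : ∑ v ∈ ({x1, x2} : Finset V), f v = f x1 + f x2 := by
    rw [Finset.sum_insert (by simp [h12]), Finset.sum_singleton]
  rw [← h]
  exact Finset.sum_le_sum_of_subset (Finset.subset_univ _)

lemma sum4_le (f : V → ℕ) (x1 x2 x3 x4 : V) (h12 : x1 ≠ x2) (h13 : x1 ≠ x3)
    (h14 : x1 ≠ x4) (h23 : x2 ≠ x3) (h24 : x2 ≠ x4) (h34 : x3 ≠ x4) :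
    f x1 + f x2 + f x3 + f x4 ≤ ∑ v, f v := by
  have h : ∑ v ∈ ({x1, x2, x3, x4} : Finset V), f v = f x1 + (f x2 + (f x3 + f x4)) := by
    rw [Finset.sum_insert (by simp [h12, h13, h14]), Finset.sum_insert (by simp [h23, h24]),
      Finset.sum_insert (by simp [h34]), Finset.sum_singleton]
  have := Finset.sum_le_sum_of_subset (f := f) (Finset.subset_univ ({x1, x2, x3, x4} : Finset V))
  omega

lemma sum5_le (f : V → ℕ) (x1 x2 x3 x4 x5 : V) (h12 : x1 ≠ x2) (h13 : x1 ≠ x3)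
    (h14 : x1 ≠ x4) (h15 : x1 ≠ x5) (h23 : x2 ≠ x3) (h24 : x2 ≠ x4) (h25 : x2 ≠ x5)
    (h34 : x3 ≠ x4) (h35 : x3 ≠ x5) (h45 : x4 ≠ x5) :
    f x1 + f x2 + f x3 + f x4 + f x5 ≤ ∑ v, f v := by
  have h : ∑ v ∈ ({x1, x2, x3, x4, x5} : Finset V), f v
      = f x1 + (f x2 + (f x3 + (f x4 + f x5))) := by
    rw [Finset.sum_insert (by simp [h12, h13, h14, h15]),
      Finset.sum_insert (by simp [h23, h24, h25]),
      Finset.sum_insert (by simp [h34, h35]),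
      Finset.sum_insert (by simp [h45]), Finset.sum_singleton]
  have := Finset.sum_le_sum_of_subset (f := f)
    (Finset.subset_univ ({x1, x2, x3, x4, x5} : Finset V))
  omega

lemma zero_of_two (f : V → ℕ) {x : V} (hx : f x = 2) (hs : ∑ v, f v ≤ 2) :
    ∀ v, v ≠ x → f v = 0 := by
  intro v hv
  have h1 : ∑ u ∈ Finset.univ.erase x, f u + f x = ∑ u, f u :=
    Finset.sum_erase_add _ _ (Finset.mem_univ x)
  have h2 : ∑ u ∈ Finset.univ.erase x, f u = 0 := by omega
  exact Finset.sum_eq_zero_iff.1 h2 v (Finset.mem_erase.2 ⟨hv, Finset.mem_univ v⟩)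

lemma almost_zero (f : V → ℕ) {x : V} (hx : f x = 2) (hs : ∑ v, f v ≤ 3) :
    ∃ y, ∀ v, v ≠ x → v ≠ y → f v = 0 := by
  by_cases hz : ∃ y, y ≠ x ∧ f y ≠ 0
  · obtain ⟨y, hyx, hy⟩ := hz
    refine ⟨y, fun v hvx hvy => ?_⟩
    have h1 : ∑ u ∈ Finset.univ.erase x, f u + f x = ∑ u, f u :=
      Finset.sum_erase_add _ _ (Finset.mem_univ x)
    have h2 : ∑ u ∈ (Finset.univ.erase x).erase y, f u + f y
        = ∑ u ∈ Finset.univ.erase x, f u :=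
      Finset.sum_erase_add _ _ (Finset.mem_erase.2 ⟨hyx, Finset.mem_univ y⟩)
    have h3 : 1 ≤ f y := Nat.one_le_iff_ne_zero.2 hy
    have h4 : ∑ u ∈ (Finset.univ.erase x).erase y, f u = 0 := by omega
    exact Finset.sum_eq_zero_iff.1 h4 v
      (Finset.mem_erase.2 ⟨hvy, Finset.mem_erase.2 ⟨hvx, Finset.mem_univ v⟩⟩)
  · push_neg at hz
    exact ⟨x, fun v hvx _ => hz v hvx⟩

lemma eq_of_two (f : V → ℕ) {x w : V} (hx : f x = 2) (hw : f w = 2)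
    (hs : ∑ v, f v ≤ 3) : w = x := by
  by_contra h
  have := sum2_le f x w (Ne.symm h)
  omega

lemma exists_two {G : SimpleGraph V} {f : V → ℕ} (hf : IsPRDF G f) (s : Finset V)
    (hcard : ∑ v, f v < s.card) : ∃ x, f x = 2 := by
  obtain ⟨v, _, hv0⟩ := exists_zero_of_sum_lt f s hcard
  obtain ⟨w, ⟨_, hw⟩, _⟩ := hf.2 v hv0
  exact ⟨w, hw⟩

lemma three_distinct (s : Set V) (h : 3 ≤ s.ncard) :
    ∃ x y z, x ∈ s ∧ y ∈ s ∧ z ∈ s ∧ x ≠ y ∧ x ≠ z ∧ y ≠ z := by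
  obtain ⟨x, y, hx, hy, hxy⟩ := (Set.one_lt_ncard_iff (Set.toFinite s)).1 (by omega)
  by_contra hc
  push_neg at hc
  have hsub : s ⊆ {x, y} := by
    intro z hz
    rcases eq_or_ne x z with h1 | h1
    · exact Or.inl h1.symm
    · exact Or.inr (hc x y z hx hy hz hxy h1).symm
  have := Set.ncard_le_ncard hsub (Set.toFinite _)
  have h2 : ({x, y} : Set V).ncard ≤ 2 := by
    have := Set.ncard_insert_le x ({y} : Set V)
    simpa using this
  omega

end Helpers

section Struct
variable {V : Type*} [Fintype V] [DecidableEq V] {T : SimpleGraph V} {a b : V}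

lemma classify (hT : T.IsTree) (hab : T.Adj a b)
    (hleaf : ∀ v : V, v ≠ a → v ≠ b → deg T v = 1)
    {v : V} (hva : v ≠ a) (hvb : v ≠ b) :
    T.neighborSet v = {a} ∨ T.neighborSet v = {b} := by
  obtain ⟨w, hw⟩ := Set.ncard_eq_one.1 (hleaf v hva hvb)
  have hadj : T.Adj v w := by
    have : w ∈ T.neighborSet v := hw ▸ Set.mem_singleton w
    exact this
  by_contra hcon
  push_neg at hcon
  have hwa : w ≠ a := fun h => hcon.1 (h ▸ hw)
  have hwb : w ≠ b := fun h => hcon.2 (h ▸ hw)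
  obtain ⟨u, hu⟩ := Set.ncard_eq_one.1 (hleaf w hwa hwb)
  have hv : v ∈ T.neighborSet w := hadj.symm
  rw [hu, Set.mem_singleton_iff] at hv
  have hu' : T.neighborSet w = {v} := hv ▸ hu
  have hclosed : ∀ x ∈ ({v, w} : Set V), ∀ y, T.Adj x y → y ∈ ({v, w} : Set V) := by
    rintro x hx y hy
    rcases hx with h | h <;> subst h
    · have : y ∈ T.neighborSet x := hy
      rw [hw, Set.mem_singleton_iff] at this
      exact Or.inr this
    · have : y ∈ T.neighborSet x := hy
      rw [hu', Set.mem_singleton_iff] at this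
      exact Or.inl this
  have ha : a ∈ ({v, w} : Set V) :=
    closed_reach T _ hclosed (hT.isConnected.preconnected v a) (Or.inl rfl)
  rcases ha with h | h
  · exact hva h.symm
  · exact hwa h.symm

lemma La_nbhd (hT : T.IsTree) (hab : T.Adj a b)
    (hleaf : ∀ v : V, v ≠ a → v ≠ b → deg T v = 1)
    {u : V} (hu : T.Adj a u) (hub : u ≠ b) : T.neighborSet u = {a} := by
  rcases classify hT hab hleaf hu.ne' hub with h | h
  · exact h
  · exfalso
    have : a ∈ T.neighborSet u := hu.symm
    rw [h, Set.mem_singleton_iff] at this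
    exact hab.ne this

lemma not_adj_La (hT : T.IsTree) (hab : T.Adj a b)
    (hleaf : ∀ v : V, v ≠ a → v ≠ b → deg T v = 1)
    {u x : V} (hu : T.Adj a u) (hub : u ≠ b) (hx : x ≠ a) : ¬ T.Adj x u := by
  intro h
  have : x ∈ T.neighborSet u := h.symm
  rw [La_nbhd hT hab hleaf hu hub, Set.mem_singleton_iff] at this
  exact hx this

lemma parts (hT : T.IsTree) (hab : T.Adj a b)
    (hleaf : ∀ v : V, v ≠ a → v ≠ b → deg T v = 1)
    {v : V} (hva : v ≠ a) (hvb : v ≠ b) : T.Adj a v ∨ T.Adj b v := by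
  rcases classify hT hab hleaf hva hvb with h | h
  · left
    have : a ∈ T.neighborSet v := by rw [h]; exact Set.mem_singleton a
    exact (Adj.symm this)
  · right
    have : b ∈ T.neighborSet v := by rw [h]; exact Set.mem_singleton b
    exact (Adj.symm this)

lemma La_ne_Lb (hT : T.IsTree) (hab : T.Adj a b)
    (hleaf : ∀ v : V, v ≠ a → v ≠ b → deg T v = 1)
    {u w : V} (hu : T.Adj a u) (hub : u ≠ b) (hw : T.Adj b w) (hwa : w ≠ a) :
    u ≠ w := by
  rintro rfl
  exact not_adj_La hT hab hleaf hu hub hab.ne' hw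

lemma deg_split (hab : T.Adj a b) :
    deg T a = {u | T.Adj a u ∧ u ≠ b}.ncard + 1 := by
  have he : T.neighborSet a = insert b {u | T.Adj a u ∧ u ≠ b} := by
    ext u
    simp only [mem_neighborSet, Set.mem_insert_iff, Set.mem_setOf_eq]
    constructor
    · intro h
      by_cases hub : u = b
      · exact Or.inl hub
      · exact Or.inr ⟨h, hub⟩
    · rintro (rfl | ⟨h, _⟩)
      · exact hab
      · exact h
  rw [deg, he, Set.ncard_insert_of_notMem (fun h => h.2 rfl)]

end Struct

section Cases
variable {V : Type*} [Fintype V] [DecidableEq V] {T : SimpleGraph V} {a b : V}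

lemma caseA (hT : T.IsTree) (hab : T.Adj a b) (hb : 2 ≤ deg T b)
    (hleaf : ∀ v : V, v ≠ a → v ≠ b → deg T v = 1)
    (h1 : {u | T.Adj a u ∧ u ≠ b}.ncard = 1) : ¬ Stable T := by
  have hleaf' : ∀ v : V, v ≠ b → v ≠ a → deg T v = 1 := fun v h1 h2 => hleaf v h2 h1
  obtain ⟨c, hc⟩ := Set.ncard_eq_one.1 h1
  have hcmem : c ∈ {u | T.Adj a u ∧ u ≠ b} := by rw [hc]; exact Set.mem_singleton c
  have hac : T.Adj a c := hcmem.1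
  have hcb : c ≠ b := hcmem.2
  have hLb : 1 ≤ {u | T.Adj b u ∧ u ≠ a}.ncard := by
    have := deg_split hab.symm
    omega
  obtain ⟨l, hl⟩ := Set.nonempty_of_ncard_ne_zero (by omega :
    {u | T.Adj b u ∧ u ≠ a}.ncard ≠ 0)
  have hbl : T.Adj b l := hl.1
  have hla : l ≠ a := hl.2
  have hlb : l ≠ b := hbl.ne'
  have hcl : c ≠ l := La_ne_Lb hT hab hleaf hac hcb hbl hla
  have hlow : 3 ≤ prdn T := by
    apply le_prdn
    intro f hf
    by_contra hlt
    push_neg at hlt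
    have hs2 : ∑ v, f v ≤ 2 := by omega
    have hcard : ({a, b, c, l} : Finset V).card = 4 := by
      rw [Finset.card_insert_of_notMem (by simp [hab.ne, hac.ne, Ne.symm hla]),
        Finset.card_insert_of_notMem (by simp [Ne.symm hcb, hbl.ne]),
        Finset.card_insert_of_notMem (by simp [hcl]), Finset.card_singleton]
    obtain ⟨x, hx2⟩ := exists_two hf {a, b, c, l} (by omega)
    have hzero := zero_of_two f hx2 hs2
    have honly : ∀ w, f w = 2 → w = x := by
      intro w hw
      by_contra hne
      have := hzero w hne
      omega
    have hpick : ∃ v, v ≠ x ∧ ¬ T.Adj v x := by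
      by_cases hxc : x = c ∨ x = a
      · refine ⟨l, ?_, fun h => ?_⟩
        · rcases hxc with rfl | rfl
          · exact Ne.symm hcl
          · exact hla
        · have hN := La_nbhd hT hab.symm hleaf' hbl hla
          have hxb : x ∈ T.neighborSet l := h
          rw [hN, Set.mem_singleton_iff] at hxb
          rcases hxc with rfl | rfl
          · exact hcb hxb
          · exact hab.ne hxb
      · push_neg at hxc
        refine ⟨c, Ne.symm hxc.1, fun h => ?_⟩
        have hN := La_nbhd hT hab hleaf hac hcb
        have hxa : x ∈ T.neighborSet c := h
        rw [hN, Set.mem_singleton_iff] at hxa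
        exact hxc.2 hxa
    obtain ⟨v, hvx, hvnadj⟩ := hpick
    obtain ⟨w, ⟨hadj, hw2⟩, _⟩ := hf.2 v (hzero v hvx)
    exact hvnadj (honly w hw2 ▸ hadj)
  have hup : prdn (T.induce {u | u ≠ c}) ≤ 2 := by
    have hbc : b ∈ {u : V | u ≠ c} := Ne.symm hcb
    set g : ↥{u : V | u ≠ c} → ℕ := fun u => if (u : V) = b then 2 else 0 with hg
    have hgPRDF : IsPRDF (T.induce {u | u ≠ c}) g := by
      constructor
      · intro v
        by_cases h : (v : V) = b <;> simp [hg, h]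
      · intro u hu
        have hub : (u : V) ≠ b := by
          intro h
          rw [hg] at hu
          simp [h] at hu
        refine ⟨⟨b, hbc⟩, ⟨?_, by simp [hg]⟩, ?_⟩
        · show T.Adj (u : V) b
          have huc : (u : V) ≠ c := u.2
          by_cases hua : (u : V) = a
          · rw [hua]; exact hab
          · rcases parts hT hab hleaf hua hub with h | h
            · exfalso
              apply huc
              have hm : (u : V) ∈ {u | T.Adj a u ∧ u ≠ b} := ⟨h, hub⟩
              rw [hc] at hm
              exact hm
            · exact h.symm
        · rintro w ⟨_, hw2⟩
          have hwb : (w : V) = b := by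
            by_contra h
            rw [hg] at hw2
            simp [h] at hw2
          exact Subtype.ext hwb
    have hle := prdn_le _ hgPRDF
    have hsum : ∑ u : ↥{u : V | u ≠ c}, g u = 2 := sum_indicator_subtype _ b hbc 2
    omega
  intro hst
  have := hst c
  omega

lemma caseB (hT : T.IsTree) (hab : T.Adj a b)
    (hleaf : ∀ v : V, v ≠ a → v ≠ b → deg T v = 1)
    (h1 : {u | T.Adj a u ∧ u ≠ b}.ncard = 2)
    (h2 : 2 ≤ {u | T.Adj b u ∧ u ≠ a}.ncard) : ¬ Stable T := by
  have hleaf' : ∀ v : V, v ≠ b → v ≠ a → deg T v = 1 := fun v h1 h2 => hleaf v h2 h1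
  obtain ⟨c, d, hcd, hLa⟩ := Set.ncard_eq_two.1 h1
  have hcmem : c ∈ {u | T.Adj a u ∧ u ≠ b} := by rw [hLa]; exact Set.mem_insert c {d}
  have hdmem : d ∈ {u | T.Adj a u ∧ u ≠ b} := by
    rw [hLa]; exact Set.mem_insert_iff.2 (Or.inr rfl)
  have hac : T.Adj a c := hcmem.1
  have hcb : c ≠ b := hcmem.2
  have had : T.Adj a d := hdmem.1
  have hdb : d ≠ b := hdmem.2
  obtain ⟨l1, l2, hl1, hl2, hl12⟩ :=
    (Set.one_lt_ncard_iff (s := {u | T.Adj b u ∧ u ≠ a}) (Set.toFinite _)).1 (by omega)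
  have hbl1 : T.Adj b l1 := hl1.1
  have hl1a : l1 ≠ a := hl1.2
  have hbl2 : T.Adj b l2 := hl2.1
  have hl2a : l2 ≠ a := hl2.2
  have hcl1 : c ≠ l1 := La_ne_Lb hT hab hleaf hac hcb hbl1 hl1a
  have hcl2 : c ≠ l2 := La_ne_Lb hT hab hleaf hac hcb hbl2 hl2a
  have hdl1 : d ≠ l1 := La_ne_Lb hT hab hleaf had hdb hbl1 hl1a
  have hdl2 : d ≠ l2 := La_ne_Lb hT hab hleaf had hdb hbl2 hl2a
  have hlow : 4 ≤ prdn T := by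
    apply le_prdn
    intro f hf
    by_contra hlt
    push_neg at hlt
    have hs3 : ∑ v, f v ≤ 3 := by omega
    have hcard : ({a, b, c, d, l1, l2} : Finset V).card = 6 := by
      rw [Finset.card_insert_of_notMem
          (by simp [hab.ne, hac.ne, had.ne, Ne.symm hl1a, Ne.symm hl2a]),
        Finset.card_insert_of_notMem
          (by simp [Ne.symm hcb, Ne.symm hdb, hbl1.ne, hbl2.ne]),
        Finset.card_insert_of_notMem (by simp [hcd, hcl1, hcl2]),
        Finset.card_insert_of_notMem (by simp [hdl1, hdl2]),
        Finset.card_insert_of_notMem (by simp [hl12]), Finset.card_singleton]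
    obtain ⟨x, hx2⟩ := exists_two hf {a, b, c, d, l1, l2} (by omega)
    obtain ⟨y, hzero⟩ := almost_zero f hx2 hs3
    have honly : ∀ w, f w = 2 → w = x := fun w hw => eq_of_two f hx2 hw hs3
    have hpick : ∃ u1 u2, u1 ≠ u2 ∧ u1 ≠ x ∧ u2 ≠ x ∧ ¬ T.Adj u1 x ∧ ¬ T.Adj u2 x := by
      have hNl1 := La_nbhd hT hab.symm hleaf' hbl1 hl1a
      have hNl2 := La_nbhd hT hab.symm hleaf' hbl2 hl2a
      by_cases hxx : x = a ∨ x = c ∨ x = d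
      · have hxb : x ≠ b := by
          rcases hxx with rfl | rfl | rfl
          · exact hab.ne
          · exact hcb
          · exact hdb
        have hl1x : l1 ≠ x := by
          rcases hxx with rfl | rfl | rfl
          · exact hl1a
          · exact Ne.symm hcl1
          · exact Ne.symm hdl1
        have hl2x : l2 ≠ x := by
          rcases hxx with rfl | rfl | rfl
          · exact hl2a
          · exact Ne.symm hcl2
          · exact Ne.symm hdl2
        refine ⟨l1, l2, hl12, hl1x, hl2x, fun h => ?_, fun h => ?_⟩
        · have hm : x ∈ T.neighborSet l1 := h
          rw [hNl1, Set.mem_singleton_iff] at hm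
          exact hxb hm
        · have hm : x ∈ T.neighborSet l2 := h
          rw [hNl2, Set.mem_singleton_iff] at hm
          exact hxb hm
      · push_neg at hxx
        obtain ⟨hxa, hxc, hxd⟩ := hxx
        have hNc := La_nbhd hT hab hleaf hac hcb
        have hNd := La_nbhd hT hab hleaf had hdb
        refine ⟨c, d, hcd, Ne.symm hxc, Ne.symm hxd, fun h => ?_, fun h => ?_⟩
        · have hm : x ∈ T.neighborSet c := h
          rw [hNc, Set.mem_singleton_iff] at hm
          exact hxa hm
        · have hm : x ∈ T.neighborSet d := h
          rw [hNd, Set.mem_singleton_iff] at hm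
          exact hxa hm
    obtain ⟨u1, u2, h12, h1x, h2x, hn1, hn2⟩ := hpick
    have hfin : ∃ v, v ≠ x ∧ v ≠ y ∧ ¬ T.Adj v x := by
      by_cases hu1y : u1 = y
      · exact ⟨u2, h2x, fun h => h12 (hu1y.trans h.symm), hn2⟩
      · exact ⟨u1, h1x, hu1y, hn1⟩
    obtain ⟨v, hvx, hvy, hvnadj⟩ := hfin
    obtain ⟨w, ⟨hadj, hw2⟩, _⟩ := hf.2 v (hzero v hvx hvy)
    exact hvnadj (honly w hw2 ▸ hadj)
  have hup : prdn (T.induce {u | u ≠ c}) ≤ 3 := by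
    have hbc : b ∈ {u : V | u ≠ c} := Ne.symm hcb
    have hdc : d ∈ {u : V | u ≠ c} := hcd.symm
    have hbd : b ≠ d := Ne.symm hdb
    set g : ↥{u : V | u ≠ c} → ℕ :=
      fun u => if (u : V) = b then 2 else if (u : V) = d then 1 else 0 with hg
    have hgPRDF : IsPRDF (T.induce {u | u ≠ c}) g := by
      constructor
      · intro v
        rw [hg]
        dsimp only
        split_ifs <;> omega
      · intro u hu
        have hub : (u : V) ≠ b := by
          intro h
          rw [hg] at hu
          simp [h] at hu
        have hud : (u : V) ≠ d := by
          intro h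
          rw [hg] at hu
          simp [h, hbd.symm] at hu
        refine ⟨⟨b, hbc⟩, ⟨?_, by simp [hg]⟩, ?_⟩
        · show T.Adj (u : V) b
          have huc : (u : V) ≠ c := u.2
          by_cases hua : (u : V) = a
          · rw [hua]; exact hab
          · rcases parts hT hab hleaf hua hub with h | h
            · exfalso
              have hm : (u : V) ∈ {u | T.Adj a u ∧ u ≠ b} := ⟨h, hub⟩
              rw [hLa] at hm
              rcases hm with hm | hm
              · exact huc hm
              · exact hud hm
            · exact h.symm
        · rintro w ⟨_, hw2⟩
          have hwb : (w : V) = b := by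
            rw [hg] at hw2
            dsimp only at hw2
            split_ifs at hw2 with hb1 hd1
            · exact hb1
            · omega
          exact Subtype.ext hwb
    have hle := prdn_le _ hgPRDF
    have hsum : ∑ u : ↥{u : V | u ≠ c}, g u = 3 := by
      have hptw : g = fun u : ↥{u : V | u ≠ c} =>
          (if (u : V) = b then 2 else 0) + (if (u : V) = d then 1 else 0) := by
        funext u
        rw [hg]
        dsimp only
        by_cases h : (u : V) = b
        · simp [h, hbd]
        · simp [h]
      rw [hptw, Finset.sum_add_distrib, sum_indicator_subtype _ b hbc 2,
        sum_indicator_subtype _ d hdc 1]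
    omega
  intro hst
  have := hst c
  omega

lemma caseC (hT : T.IsTree) (hab : T.Adj a b) (hb : 2 ≤ deg T b)
    (hleaf : ∀ v : V, v ≠ a → v ≠ b → deg T v = 1)
    (h1 : 3 ≤ {u | T.Adj a u ∧ u ≠ b}.ncard) : ¬ Stable T := by
  have hleaf' : ∀ v : V, v ≠ b → v ≠ a → deg T v = 1 := fun v h1 h2 => hleaf v h2 h1
  obtain ⟨c, d, e, hcmem, hdmem, hemem, hcd, hce, hde⟩ := three_distinct _ h1
  have hac : T.Adj a c := hcmem.1
  have hcb : c ≠ b := hcmem.2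
  have had : T.Adj a d := hdmem.1
  have hdb : d ≠ b := hdmem.2
  have hae : T.Adj a e := hemem.1
  have heb : e ≠ b := hemem.2
  have hLb : 1 ≤ {u | T.Adj b u ∧ u ≠ a}.ncard := by
    have := deg_split hab.symm
    omega
  obtain ⟨l, hl⟩ := Set.nonempty_of_ncard_ne_zero (by omega :
    {u | T.Adj b u ∧ u ≠ a}.ncard ≠ 0)
  have hbl : T.Adj b l := hl.1
  have hla : l ≠ a := hl.2
  have hcl : c ≠ l := La_ne_Lb hT hab hleaf hac hcb hbl hla
  have hdl : d ≠ l := La_ne_Lb hT hab hleaf had hdb hbl hla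
  have hel : e ≠ l := La_ne_Lb hT hab hleaf hae heb hbl hla
  have hup : prdn T ≤ 4 := by
    set f : V → ℕ := fun v => (if v = a then 2 else 0) + (if v = b then 2 else 0) with hf
    have hfPRDF : IsPRDF T f := by
      constructor
      · intro v
        rw [hf]
        dsimp only
        by_cases h : v = a
        · simp [h, hab.ne]
        · simp [h]
          split <;> omega
      · intro v hv
        have hva : v ≠ a := by
          intro h
          rw [hf] at hv
          simp [h] at hv
        have hvb : v ≠ b := by
          intro h
          rw [hf] at hv
          simp [h] at hv
        rcases parts hT hab hleaf hva hvb with h | h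
        · refine ⟨a, ⟨h.symm, by simp [hf, hab.ne]⟩, ?_⟩
          rintro w ⟨hadj, _⟩
          have hm : w ∈ T.neighborSet v := hadj
          rw [La_nbhd hT hab hleaf h hvb, Set.mem_singleton_iff] at hm
          exact hm
        · refine ⟨b, ⟨h.symm, by simp [hf, hab.ne']⟩, ?_⟩
          rintro w ⟨hadj, _⟩
          have hm : w ∈ T.neighborSet v := hadj
          rw [La_nbhd hT hab.symm hleaf' h hva, Set.mem_singleton_iff] at hm
          exact hm
    have hle := prdn_le _ hfPRDF
    have hsum : ∑ v, f v = 4 := by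
      rw [hf]
      dsimp only
      rw [Finset.sum_add_distrib, Finset.sum_ite_eq' Finset.univ a (fun _ => 2),
        Finset.sum_ite_eq' Finset.univ b (fun _ => 2)]
      simp
    omega
  have hlow : 5 ≤ prdn (T.induce {u | u ≠ a}) := by
    apply le_prdn
    intro g hg
    have hca : c ∈ {u : V | u ≠ a} := hac.ne'
    have hda : d ∈ {u : V | u ≠ a} := had.ne'
    have hea : e ∈ {u : V | u ≠ a} := hae.ne'
    have hba : b ∈ {u : V | u ≠ a} := hab.ne'
    have hlamem : l ∈ {u : V | u ≠ a} := hla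
    set ch : ↥{u : V | u ≠ a} := ⟨c, hca⟩
    set dh : ↥{u : V | u ≠ a} := ⟨d, hda⟩
    set eh : ↥{u : V | u ≠ a} := ⟨e, hea⟩
    set bh : ↥{u : V | u ≠ a} := ⟨b, hba⟩
    set lh : ↥{u : V | u ≠ a} := ⟨l, hlamem⟩
    have glea : ∀ (u : ↥{x : V | x ≠ a}), T.Adj a ↑u → (↑u : V) ≠ b → 1 ≤ g u := by
      intro u huadj hub
      rcases Nat.eq_zero_or_pos (g u) with h0 | h
      · exfalso
        obtain ⟨w, ⟨hadj, _⟩, _⟩ := hg.2 u h0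
        have hm : (w : V) ∈ T.neighborSet ↑u := hadj
        rw [La_nbhd hT hab hleaf huadj hub, Set.mem_singleton_iff] at hm
        exact w.2 hm
      · exact h
    have hc1 : 1 ≤ g ch := glea ch hac hcb
    have hd1 : 1 ≤ g dh := glea dh had hdb
    have he1 : 1 ≤ g eh := glea eh hae heb
    have hcd' : ch ≠ dh := fun h => hcd (congrArg Subtype.val h)
    have hce' : ch ≠ eh := fun h => hce (congrArg Subtype.val h)
    have hde' : dh ≠ eh := fun h => hde (congrArg Subtype.val h)
    by_cases hgb : g bh = 0
    · obtain ⟨w, ⟨hadj, hw2⟩, _⟩ := hg.2 bh hgb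
      have hbw : T.Adj b ↑w := hadj
      have hwa : (w : V) ≠ a := w.2
      have hcw : ch ≠ w := fun h =>
        (La_ne_Lb hT hab hleaf hac hcb hbw hwa) (congrArg Subtype.val h)
      have hdw : dh ≠ w := fun h =>
        (La_ne_Lb hT hab hleaf had hdb hbw hwa) (congrArg Subtype.val h)
      have hew : eh ≠ w := fun h =>
        (La_ne_Lb hT hab hleaf hae heb hbw hwa) (congrArg Subtype.val h)
      have := sum4_le g ch dh eh w hcd' hce' hcw hde' hdw hew
      omega
    · have hb1 : 1 ≤ g bh := Nat.pos_of_ne_zero hgb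
      have hcb' : ch ≠ bh := fun h => hcb (congrArg Subtype.val h)
      have hdb' : dh ≠ bh := fun h => hdb (congrArg Subtype.val h)
      have heb' : eh ≠ bh := fun h => heb (congrArg Subtype.val h)
      by_cases hgb2 : g bh = 2
      · have := sum4_le g ch dh eh bh hcd' hce' hcb' hde' hdb' heb'
        omega
      · have hl1 : 1 ≤ g lh := by
          rcases Nat.eq_zero_or_pos (g lh) with h0 | h
          · exfalso
            obtain ⟨w, ⟨hadj, hw2⟩, _⟩ := hg.2 lh h0
            have hm : (w : V) ∈ T.neighborSet l := hadj
            rw [La_nbhd hT hab.symm hleaf' hbl hla, Set.mem_singleton_iff] at hm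
            have hwb : w = bh := Subtype.ext hm
            rw [hwb] at hw2
            exact hgb2 hw2
          · exact h
        have hcl' : ch ≠ lh := fun h => hcl (congrArg Subtype.val h)
        have hdl' : dh ≠ lh := fun h => hdl (congrArg Subtype.val h)
        have hel' : eh ≠ lh := fun h => hel (congrArg Subtype.val h)
        have hbl' : bh ≠ lh := fun h => hbl.ne' (congrArg Subtype.val h).symm
        have := sum5_le g ch dh eh bh lh hcd' hce' hcb' hcl' hde' hdb' hdl' heb' hel' hbl'
        omega
  intro hst
  have := hst a
  omega

end Cases

/-- no double star DS_{p,q} (p,q ≥ 1) is perfect Roman domination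
stable.  A double star is a tree with exactly two non-leaf vertices, which are
adjacent. -/
theorem stmt12 {V : Type*} [Fintype V] [DecidableEq V] (T : SimpleGraph V)
    (hT : T.IsTree) (a b : V) (hab : T.Adj a b)
    (ha : 2 ≤ deg T a) (hb : 2 ≤ deg T b)
    (hleaf : ∀ v : V, v ≠ a → v ≠ b → deg T v = 1) :
    ¬ Stable T := by
  have hleaf' : ∀ v : V, v ≠ b → v ≠ a → deg T v = 1 := fun v h1 h2 => hleaf v h2 h1
  have hda : deg T a = {u | T.Adj a u ∧ u ≠ b}.ncard + 1 := deg_split hab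
  have hdb : deg T b = {u | T.Adj b u ∧ u ≠ a}.ncard + 1 := deg_split hab.symm
  by_cases hA1 : {u | T.Adj a u ∧ u ≠ b}.ncard = 1
  · exact caseA hT hab hb hleaf hA1
  by_cases hB1 : {u | T.Adj b u ∧ u ≠ a}.ncard = 1
  · exact caseA hT hab.symm ha hleaf' hB1
  by_cases hA2 : {u | T.Adj a u ∧ u ≠ b}.ncard = 2
  · exact caseB hT hab hleaf hA2 (by omega)
  by_cases hB2 : {u | T.Adj b u ∧ u ≠ a}.ncard = 2
  · exact caseB hT hab.symm hleaf' hB2 (by omega)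
  · exact caseC hT hab hb hleaf (by omega)
end
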